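/- arXiv:2507.02882 — 4 statements merged into one kernel-verified Lean document; each statement's English description precedes it below -/
import Mathlib

section
/- The operation * satisfies the power-associativity identity (a*a)*(a*a) = ((a*a)*a)*a for every a ∈ K³. -/
/-- The multilinear operation on K³ (vectors as K × K × K). -/
def mul3 {K : Type*} [CommRing K] (A B C D E : K) (a b : K × K × K) : K × K × K :=
  (a.1 + b.1 + a.1 * b.1 + A * (a.2.1 * b.2.1) + C * (a.2.2 * b.2.1) + B * (a.2.2 * b.2.2),
   a.2.1 + b.2.1 + a.2.1 * b.1 + a.1 * b.2.1 + D * (a.2.1 * b.2.1) + E * (a.2.1 * b.2.2),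
   a.2.2 + b.2.2 + a.2.2 * b.1 + a.1 * b.2.2 + D * (a.2.2 * b.2.1) + E * (a.2.2 * b.2.2))

theorem stmt6 {K : Type*} [CommRing K] (A B C D E : K) (a : K × K × K) :
    mul3 A B C D E (mul3 A B C D E a a) (mul3 A B C D E a a) =
      mul3 A B C D E (mul3 A B C D E (mul3 A B C D E a a) a) a := by
  obtain ⟨x, y, z⟩ := a
  simp only [mul3, Prod.mk.injEq]
  refine ⟨by ring, by ring, by ring⟩
end

section
/- Define a¹ = a and aⁿ⁺¹ = aⁿ * a (left-associated powers). Then for all a ∈ K³ and all n ≥ 1, one has (aⁿ)₁ · a₂ = (aⁿ)₂ · a₁; that is, the pair of components (aⁿ)₁, (aⁿ)₂ remains proportional to (a₁, a₂) under iteration. -/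
/-- Left-associated powers: a¹ = a, aⁿ⁺¹ = aⁿ * a. -/
def pow3 {K : Type*} [CommRing K] (A B C D E : K) (a : K × K × K) : ℕ → K × K × K
  | 0 => a
  | n + 1 => mul3 A B C D E (pow3 A B C D E a n) a

lemma key {K : Type*} [CommRing K] (A B C D E : K) (a : K × K × K) (m : ℕ) :
    (pow3 A B C D E a m).2.1 * a.2.2 = (pow3 A B C D E a m).2.2 * a.2.1 := by
  induction m with
  | zero => simp [pow3, mul_comm]
  | succ k ih =>
    simp only [pow3, mul3]
    ring_nf
    linear_combination (1 + a.1 + D * a.2.1 + E * a.2.2) * ih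

theorem stmt7 {K : Type*} [CommRing K] (A B C D E : K) (a : K × K × K) (n : ℕ) (hn : 1 ≤ n) :
    (pow3 A B C D E a (n - 1)).2.1 * a.2.2 = (pow3 A B C D E a (n - 1)).2.2 * a.2.1 := by
  exact key A B C D E a (n - 1)
end

section
/- For every a ∈ K³ and every n ≥ 1, there exists a scalar s ∈ K with (aⁿ)₁ = a₁·s and (aⁿ)₂ = a₂·s, where aⁿ denotes the left-associated n-th power under *. -/
theorem stmt8 {K : Type*} [CommRing K] (A B C D E : K) (a : K × K × K) (n : ℕ) (hn : 1 ≤ n) :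
    ∃ s : K, (pow3 A B C D E a (n - 1)).2.1 = a.2.1 * s ∧
      (pow3 A B C D E a (n - 1)).2.2 = a.2.2 * s := by
  induction n - 1 with
  | zero => exact ⟨1, by simp [pow3], by simp [pow3]⟩
  | succ m ih =>
    obtain ⟨s, h1, h2⟩ := ih
    refine ⟨s + 1 + s * a.1 + (pow3 A B C D E a m).1 + D * (s * a.2.1) + E * (s * a.2.2),
      ?_, ?_⟩ <;> simp only [pow3, mul3, h1, h2] <;> ring
end

section
/- For the four-dimensional operation, (a*a) * a = a * (a*a) for every a ∈ K⁴. -/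
/-- The multilinear operation on K⁴ (vectors as K × K × K × K). -/
def mul4 {K : Type*} [CommRing K] (A B C D E F G H I : K) (a b : K × K × K × K) :
    K × K × K × K :=
  (a.1 + b.1 + a.1 * b.1 + A * (a.2.1 * b.2.1) + E * (a.2.2.2 * b.2.1)
      + B * (a.2.2.1 * b.2.2.1) + D * (a.2.1 * b.2.2.1) + F * (a.2.2.2 * b.2.2.1)
      + C * (a.2.2.2 * b.2.2.2),
   a.2.1 + b.2.1 + a.2.1 * b.1 + a.1 * b.2.1 + G * (a.2.1 * b.2.1)
      + H * (a.2.1 * b.2.2.1) + I * (a.2.1 * b.2.2.2),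
   a.2.2.1 + b.2.2.1 + a.2.2.1 * b.1 + a.1 * b.2.2.1 + G * (a.2.2.1 * b.2.1)
      + H * (a.2.2.1 * b.2.2.1) + I * (a.2.2.1 * b.2.2.2),
   a.2.2.2 + b.2.2.2 + a.2.2.2 * b.1 + a.1 * b.2.2.2 + G * (a.2.2.2 * b.2.1)
      + H * (a.2.2.2 * b.2.2.1) + I * (a.2.2.2 * b.2.2.2))

theorem stmt18 {K : Type*} [CommRing K] (A B C D E F G H I : K) (a : K × K × K × K) :
    mul4 A B C D E F G H I (mul4 A B C D E F G H I a a) a =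
      mul4 A B C D E F G H I a (mul4 A B C D E F G H I a a) := by
  simp only [mul4, Prod.mk.injEq]
  refine ⟨by ring, by ring, by ring, by ring⟩
end
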